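/- Let α ∈ (0,1), q ∈ (0,1), let d, n ≥ 1, let P be a probability distribution on ℝ^d × ℝ, let g be a conditional q-quantile function of P, and let (X₁,Y₁),…,(X_{n+1},Y_{n+1}) be i.i.d. with law P. Let Ĉ be a map assigning to each ((x₁,y₁),…,(x_n,y_n), x) ∈ (ℝ^d × ℝ)^n × ℝ^d a convex subset (interval) of ℝ, such that the coverage events below are measurable. If ℙ( Y_{n+1} ∈ Ĉ((X₁,Y₁),…,(X_n,Y_n); X_{n+1}) ) ≥ 1 − min{q, 1−q}·α, then ℙ( g(X_{n+1}) ∈ Ĉ((X₁,Y₁),…,(X_n,Y_n); X_{n+1}) ) ≥ 1 − α. -/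

import Mathlib

open MeasureTheory ProbabilityTheory
open scoped ENNReal NNReal

/-- The `k`-th smallest value (1-indexed) of the multiset `{E i : i}`, as an extended real:
`⊥` if `k ≤ 0` and `⊤` if `k > N`. -/
noncomputable def kthSmallest {N : ℕ} (E : Fin N → ℝ) (k : ℤ) : EReal :=
  if k ≤ 0 then ⊥
  else if (N : ℤ) < k then ⊤
  else (((Multiset.map E Finset.univ.val).sort (· ≤ ·)).getD (k.toNat - 1) 0 : ℝ)

/-- `m` is a conditional median function for `P`. -/
def IsCondMedian {d : ℕ} (P : Measure ((Fin d → ℝ) × ℝ)) [IsFiniteMeasure P]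
    (m : (Fin d → ℝ) → ℝ) : Prop :=
  Measurable m ∧
    ∀ᵐ x ∂P.fst, (1 : ℝ≥0∞) / 2 ≤ P.condKernel x (Set.Iic (m x)) ∧
      (1 : ℝ≥0∞) / 2 ≤ P.condKernel x (Set.Ici (m x))

/-- `g` is a conditional `q`-quantile function for `P`. -/
def IsCondQuantile {d : ℕ} (q : ℝ) (P : Measure ((Fin d → ℝ) × ℝ)) [IsFiniteMeasure P]
    (g : (Fin d → ℝ) → ℝ) : Prop :=
  Measurable g ∧
    ∀ᵐ x ∂P.fst, ENNReal.ofReal q ≤ P.condKernel x (Set.Iic (g x)) ∧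
      ENNReal.ofReal (1 - q) ≤ P.condKernel x (Set.Ici (g x))

lemma aux_convex_split {s : Set ℝ} (hs : Convex ℝ s) {t : ℝ} (ht : t ∉ s) :
    s ⊆ Set.Iio t ∨ s ⊆ Set.Ioi t := by
  by_contra h
  push_neg at h
  obtain ⟨h1, h2⟩ := h
  obtain ⟨a, ha, ha'⟩ := Set.not_subset.mp h1
  obtain ⟨b, hb, hb'⟩ := Set.not_subset.mp h2
  exact ht (hs.ordConnected.out hb ha ⟨le_of_not_gt hb', le_of_not_gt ha'⟩)

/-- Second extension of Theorem 3.2 (Remark 3.1 / Appendix A.5): interval-valued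
predictive coverage at level `1 - min{q, 1-q}·α` implies conditional `q`-quantile
coverage at level `1 - α`.  Datapoints are indexed by `Fin (n + 1)`, the last one being
the test point. -/
theorem statement_7 {d n : ℕ} (hd : 1 ≤ d) (hn : 1 ≤ n)
    {α q : ℝ} (hα : α ∈ Set.Ioo (0 : ℝ) 1) (hq : q ∈ Set.Ioo (0 : ℝ) 1)
    (P : Measure ((Fin d → ℝ) × ℝ)) [IsProbabilityMeasure P]
    (g : (Fin d → ℝ) → ℝ) (hg : IsCondQuantile q P g)
    (C : (Fin n → ((Fin d → ℝ) × ℝ)) → (Fin d → ℝ) → Set ℝ)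
    (hC : ∀ data x, Convex ℝ (C data x))
    (hmeasPred : MeasurableSet {ω : Fin (n + 1) → ((Fin d → ℝ) × ℝ) |
      (ω (Fin.last n)).2 ∈ C (fun i => ω i.castSucc) (ω (Fin.last n)).1})
    (hmeasQuant : MeasurableSet {ω : Fin (n + 1) → ((Fin d → ℝ) × ℝ) |
      g (ω (Fin.last n)).1 ∈ C (fun i => ω i.castSucc) (ω (Fin.last n)).1})
    (hpred : ENNReal.ofReal (1 - min q (1 - q) * α) ≤
      (Measure.pi fun _ : Fin (n + 1) => P)
        {ω | (ω (Fin.last n)).2 ∈ C (fun i => ω i.castSucc) (ω (Fin.last n)).1}) :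
    ENNReal.ofReal (1 - α) ≤
      (Measure.pi fun _ : Fin (n + 1) => P)
        {ω | g (ω (Fin.last n)).1 ∈ C (fun i => ω i.castSucc) (ω (Fin.last n)).1} := by
  obtain ⟨-, hgae⟩ := hg
  classical
  set m : ℝ := min q (1 - q) with hm_def
  have hm0 : 0 < m := lt_min hq.1 (by linarith [hq.2])
  have hmq : m ≤ q := min_le_left _ _
  have hmq' : m ≤ 1 - q := min_le_right _ _
  have hm1 : m < 1 := lt_of_le_of_lt hmq hq.2
  set c : ℝ≥0∞ := ENNReal.ofReal (1 - m) with hc_def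
  set ν : Measure (Fin n → ((Fin d → ℝ) × ℝ)) := Measure.pi fun _ => P with hν_def
  set F : Measure (Fin d → ℝ) := P.fst with hF_def
  set κ := P.condKernel with hκ_def
  set e := MeasurableEquiv.piFinSuccAbove (fun _ : Fin (n + 1) => ((Fin d → ℝ) × ℝ)) (Fin.last n) with he_def
  have hmp := measurePreserving_piFinSuccAbove (fun _ : Fin (n + 1) => P) (Fin.last n)
  set SB := {ω : Fin (n + 1) → ((Fin d → ℝ) × ℝ) |
      (ω (Fin.last n)).2 ∈ C (fun i => ω i.castSucc) (ω (Fin.last n)).1} with hSB_def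
  set SA := {ω : Fin (n + 1) → ((Fin d → ℝ) × ℝ) |
      g (ω (Fin.last n)).1 ∈ C (fun i => ω i.castSucc) (ω (Fin.last n)).1} with hSA_def
  set TB := {p : ((Fin d → ℝ) × ℝ) × (Fin n → ((Fin d → ℝ) × ℝ)) | p.1.2 ∈ C p.2 p.1.1} with hTB_def
  set TA := {p : ((Fin d → ℝ) × ℝ) × (Fin n → ((Fin d → ℝ) × ℝ)) | g p.1.1 ∈ C p.2 p.1.1} with hTA_def
  have hpreB : e ⁻¹' TB = SB := by
    ext ω
    simp only [e, TB, SB, MeasurableEquiv.piFinSuccAbove, Fin.succAbove_last, Set.mem_preimage,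
      Set.mem_setOf_eq, MeasurableEquiv.coe_mk, Equiv.coe_fn_mk, Fin.insertNthEquiv,
      Equiv.coe_fn_symm_mk]
    simp [Fin.removeNth, Fin.succAbove_last, Fin.init_def]
  have hpreA : e ⁻¹' TA = SA := by
    ext ω
    simp only [e, TA, SA, MeasurableEquiv.piFinSuccAbove, Fin.succAbove_last, Set.mem_preimage,
      Set.mem_setOf_eq, MeasurableEquiv.coe_mk, Equiv.coe_fn_mk, Fin.insertNthEquiv,
      Equiv.coe_fn_symm_mk]
    simp [Fin.removeNth, Fin.succAbove_last, Fin.init_def]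
  have hTBmeas : MeasurableSet TB := by
    have : TB = e.symm ⁻¹' SB := by
      rw [← hpreB, Set.preimage_preimage]; simp
    rw [this]
    exact e.symm.measurable hmeasPred
  have hTAmeas : MeasurableSet TA := by
    have : TA = e.symm ⁻¹' SA := by
      rw [← hpreA, Set.preimage_preimage]; simp
    rw [this]
    exact e.symm.measurable hmeasQuant
  have hBeq : (Measure.pi fun _ : Fin (n + 1) => P) SB = (P.prod ν) TB := by
    rw [← hpreB]; exact hmp.measure_preimage hTBmeas.nullMeasurableSet
  have hAeq : (Measure.pi fun _ : Fin (n + 1) => P) SA = (P.prod ν) TA := by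
    rw [← hpreA]; exact hmp.measure_preimage hTAmeas.nullMeasurableSet
  have hsliceB : ∀ data, MeasurableSet ((fun p : (Fin d → ℝ) × ℝ => (p, data)) ⁻¹' TB) :=
    fun data => hTBmeas.preimage (measurable_id.prodMk measurable_const)
  have huAll : ∀ data, MeasurableSet {x | g x ∈ C data x} := by
    intro data
    have h0 : {x | g x ∈ C data x} = (fun x => ((x, (0 : ℝ)), data)) ⁻¹' TA := rfl
    rw [h0]
    exact hTAmeas.preimage ((measurable_id.prodMk measurable_const).prodMk measurable_const)
  haveI : SFinite ν := by
    haveI : ∀ _ : Fin n, SigmaFinite P := fun _ => inferInstance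
    have := Measure.pi.sigmaFinite (fun _ : Fin n => P)
    infer_instance
  have hBint : (P.prod ν) TB = ∫⁻ data, ∫⁻ x, κ x (C data x) ∂F ∂ν := by
    rw [Measure.prod_apply_symm hTBmeas]
    refine lintegral_congr fun data => ?_
    conv_lhs => rw [← P.disintegrate P.condKernel]
    rw [Measure.compProd_apply (hsliceB data)]
    rfl
  have hAint : (P.prod ν) TA = ∫⁻ data, F {x | g x ∈ C data x} ∂ν := by
    rw [Measure.prod_apply_symm hTAmeas]
    refine lintegral_congr fun data => ?_
    rw [Measure.fst_apply (huAll data)]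
    rfl
  have hkey : ∀ data, ∫⁻ x, κ x (C data x) ∂F ≤
      c + ENNReal.ofReal m * F {x | g x ∈ C data x} := by
    intro data
    calc ∫⁻ x, κ x (C data x) ∂F
        ≤ ∫⁻ x, (c + Set.indicator {x | g x ∈ C data x}
            (fun _ => ENNReal.ofReal m) x) ∂F := by
          refine lintegral_mono_ae ?_
          filter_upwards [hgae] with x hx
          by_cases hmem : g x ∈ C data x
          · rw [Set.indicator_of_mem (show x ∈ {x | g x ∈ C data x} from hmem), hc_def,
              ← ENNReal.ofReal_add (by linarith) hm0.le,
              show (1 - m) + m = 1 by ring, ENNReal.ofReal_one]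
            exact prob_le_one
          · rw [Set.indicator_of_notMem (show x ∉ {x | g x ∈ C data x} from hmem), add_zero]
            rcases aux_convex_split (hC data x) hmem with hsub | hsub
            · calc κ x (C data x) ≤ κ x (Set.Iio (g x)) := measure_mono hsub
                _ = 1 - κ x (Set.Ici (g x)) := by
                    rw [← Set.compl_Ici,
                      measure_compl measurableSet_Ici (measure_ne_top _ _), measure_univ]
                _ ≤ 1 - ENNReal.ofReal (1 - q) := tsub_le_tsub_left hx.2 1
                _ ≤ c := by
                    rw [tsub_le_iff_right, hc_def,
                      ← ENNReal.ofReal_add (by linarith) (by linarith)]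
                    exact ENNReal.one_le_ofReal.mpr (by linarith)
            · calc κ x (C data x) ≤ κ x (Set.Ioi (g x)) := measure_mono hsub
                _ = 1 - κ x (Set.Iic (g x)) := by
                    rw [← Set.compl_Iic,
                      measure_compl measurableSet_Iic (measure_ne_top _ _), measure_univ]
                _ ≤ 1 - ENNReal.ofReal q := tsub_le_tsub_left hx.1 1
                _ ≤ c := by
                    rw [tsub_le_iff_right, hc_def,
                      ← ENNReal.ofReal_add (by linarith) (by linarith)]
                    exact ENNReal.one_le_ofReal.mpr (by linarith)
      _ = c + ENNReal.ofReal m * F {x | g x ∈ C data x} := by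
          rw [lintegral_add_left measurable_const, lintegral_const, measure_univ, mul_one,
            lintegral_indicator_const (huAll data)]
  have hmain : (Measure.pi fun _ : Fin (n + 1) => P) SB ≤
      c + ENNReal.ofReal m * (Measure.pi fun _ : Fin (n + 1) => P) SA := by
    rw [hBeq, hBint, hAeq, hAint]
    calc ∫⁻ data, ∫⁻ x, κ x (C data x) ∂F ∂ν
        ≤ ∫⁻ data, (c + ENNReal.ofReal m * F {x | g x ∈ C data x}) ∂ν :=
          lintegral_mono hkey
      _ = c + ENNReal.ofReal m * ∫⁻ data, F {x | g x ∈ C data x} ∂ν := by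
          rw [lintegral_add_left measurable_const, lintegral_const, measure_univ, mul_one,
            lintegral_const_mul' _ _ ENNReal.ofReal_ne_top]
  set a := (Measure.pi fun _ : Fin (n + 1) => P) SA with ha_def
  have h1 : ENNReal.ofReal (1 - m * α) ≤ c + ENNReal.ofReal m * a := le_trans hpred hmain
  have h2 : ENNReal.ofReal m * ENNReal.ofReal (1 - α) ≤ ENNReal.ofReal m * a := by
    have e1 : ENNReal.ofReal (1 - m * α) - c = ENNReal.ofReal m * ENNReal.ofReal (1 - α) := by
      rw [hc_def, ← ENNReal.ofReal_sub _ (by linarith : (0 : ℝ) ≤ 1 - m),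
        ← ENNReal.ofReal_mul hm0.le]
      congr 1
      ring
    rw [← e1]
    calc ENNReal.ofReal (1 - m * α) - c ≤ (c + ENNReal.ofReal m * a) - c :=
          tsub_le_tsub_right h1 c
      _ = ENNReal.ofReal m * a := by
          rw [hc_def, ENNReal.add_sub_cancel_left ENNReal.ofReal_ne_top]
  exact (ENNReal.mul_le_mul_iff_right (ENNReal.ofReal_pos.mpr hm0).ne' ENNReal.ofReal_ne_top).mp h2
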